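/- Let 0 < L₁ < L₂, t>0, and let w₀ ∈ L¹(ℝ;ℂ). Then for every z ∈ ℂ with |Re z| + |Im z| ≤ L₁, the tail integral w₂(t,z) = ∫_{{ξ∈ℝ : |ξ| ≥ L₂}} K(t,z,ξ) w₀(ξ) dξ satisfies |w₂(t,z)| ≤ (2π sinh(2t))^{−1/2} · exp(−(L₂−L₁)²/(2 sinh(2t))) · ‖w₀‖_{L¹(ℝ)}. In particular w₂(t,·) → 0 uniformly on the closed square {|Re z|+|Im z| ≤ L₁} as t → 0⁺. -/

import Mathlib

open MeasureTheory Filter Topology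

/-- The Mehler kernel, extended to a complex spatial variable. -/
noncomputable def mehlerK (t : ℝ) (z : ℂ) (ξ : ℝ) : ℂ :=
  (((Real.sqrt (2 * Real.pi * Real.sinh (2 * t)))⁻¹ : ℝ) : ℂ) *
    Complex.exp
      (-(((Real.cosh (2 * t) / Real.sinh (2 * t)) : ℝ) : ℂ) * (z ^ 2 + ((ξ : ℂ)) ^ 2) / 2
        + z * (ξ : ℂ) / ((Real.sinh (2 * t) : ℝ) : ℂ))

lemma mehler_bound (L₁ L₂ t : ℝ) (h₁₂ : L₁ < L₂) (ht : 0 < t) (z : ℂ)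
    (hz : |z.re| + |z.im| ≤ L₁) (ξ : ℝ) (hξ : L₂ ≤ |ξ|) :
    ‖mehlerK t z ξ‖ ≤ (Real.sqrt (2 * Real.pi * Real.sinh (2 * t)))⁻¹ *
      Real.exp (-(L₂ - L₁) ^ 2 / (2 * Real.sinh (2 * t))) := by
  set s := Real.sinh (2 * t) with hs_def
  have hs : 0 < s := Real.sinh_pos_iff.2 (by linarith)
  have hcosh : 1 ≤ Real.cosh (2 * t) := Real.one_le_cosh _
  set c := Real.cosh (2 * t) / s with hc_def
  have hcs : c * s = Real.cosh (2 * t) := by rw [hc_def, div_mul_cancel₀ _ hs.ne']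
  have hc1 : 1 ≤ c * s := by rw [hcs]; exact hcosh
  have hcpos : 0 < c := div_pos (by linarith) hs
  clear_value s c
  rw [mehlerK, ← hs_def, ← hc_def, norm_mul, Complex.norm_exp]
  have hre : (-((c : ℝ) : ℂ) * (z ^ 2 + ((ξ : ℂ)) ^ 2) / 2
        + z * (ξ : ℂ) / ((s : ℝ) : ℂ)).re
      = -c * ((z.re ^ 2 - z.im ^ 2) + ξ ^ 2) / 2 + z.re * ξ / s := by
    simp [Complex.add_re, Complex.div_ofReal_re, Complex.mul_re, Complex.ofReal_re,
      Complex.ofReal_im, pow_two]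
  rw [hre, Complex.norm_real, Real.norm_eq_abs, abs_of_nonneg (by positivity)]
  refine mul_le_mul_of_nonneg_left (Real.exp_le_exp.2 ?_) (by positivity)
  set x := z.re; set y := z.im
  have hx : |x| + |y| ≤ L₁ := hz
  have habs : x * ξ ≤ |x| * |ξ| := (le_abs_self _).trans (by rw [abs_mul])
  have hxa : 0 ≤ |x| := abs_nonneg _
  have hya : 0 ≤ |y| := abs_nonneg _
  have hx2 : x ^ 2 = |x| ^ 2 := (sq_abs x).symm
  have hy2 : y ^ 2 = |y| ^ 2 := (sq_abs y).symm
  have hxi2 : ξ ^ 2 = |ξ| ^ 2 := (sq_abs ξ).symm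
  have hBA : L₂ - L₁ + |y| ≤ |ξ| - |x| := by linarith
  have key : (L₂ - L₁) ^ 2 + y ^ 2 ≤ (|ξ| - |x|) ^ 2 := by
    rw [hy2]
    nlinarith [hBA, abs_nonneg y, h₁₂]
  have h1 : x * ξ / s ≤ c * (|x| * |ξ|) := by
    have hA : x * ξ / s ≤ |x| * |ξ| / s := by gcongr
    refine hA.trans ?_
    rw [div_le_iff₀ hs]
    nlinarith [mul_nonneg (sub_nonneg.2 hc1) (mul_nonneg hxa (abs_nonneg ξ))]
  have step1 : -c * ((x ^ 2 - y ^ 2) + ξ ^ 2) / 2 + x * ξ / s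
      ≤ -(c/2) * ((|ξ| - |x|) ^ 2 - y ^ 2) := by
    rw [hx2, hxi2]
    have expand : -(c/2) * ((|ξ| - |x|) ^ 2 - y ^ 2)
        = -c * ((|x| ^ 2 - y ^ 2) + |ξ| ^ 2) / 2 + c * (|x| * |ξ|) := by ring
    linarith [h1]
  have step2 : -(c/2) * ((|ξ| - |x|) ^ 2 - y ^ 2) ≤ -(c/2) * (L₂ - L₁) ^ 2 := by
    have h2 := mul_le_mul_of_nonneg_left (by linarith [key] : (L₂ - L₁) ^ 2 ≤ (|ξ| - |x|) ^ 2 - y ^ 2)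
      (by positivity : (0:ℝ) ≤ c / 2)
    linarith
  have step3 : -(c/2) * (L₂ - L₁) ^ 2 ≤ -(L₂ - L₁) ^ 2 / (2 * s) := by
    have h3 : (L₂ - L₁) ^ 2 ≤ (L₂ - L₁) ^ 2 * (c * s) :=
      le_mul_of_one_le_right (sq_nonneg _) hc1
    rw [neg_div, neg_mul, neg_le_neg_iff, div_le_iff₀ (by positivity)]
    have h4 : c / 2 * (L₂ - L₁) ^ 2 * (2 * s) = (L₂ - L₁) ^ 2 * (c * s) := by ring
    linarith
  linarith

theorem stmt13 (L₁ L₂ : ℝ) (h₁ : 0 < L₁) (h₁₂ : L₁ < L₂)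
    (w0 : ℝ → ℂ) (hw0 : Integrable w0) :
    (∀ t : ℝ, 0 < t → ∀ z : ℂ, |z.re| + |z.im| ≤ L₁ →
      ‖∫ ξ in {ξ : ℝ | L₂ ≤ |ξ|}, mehlerK t z ξ * w0 ξ‖ ≤
        (Real.sqrt (2 * Real.pi * Real.sinh (2 * t)))⁻¹ *
          Real.exp (-(L₂ - L₁) ^ 2 / (2 * Real.sinh (2 * t))) * ∫ ξ : ℝ, ‖w0 ξ‖)
    ∧ TendstoUniformlyOn
        (fun (t : ℝ) (z : ℂ) => ∫ ξ in {ξ : ℝ | L₂ ≤ |ξ|}, mehlerK t z ξ * w0 ξ)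
        0 (𝓝[>] (0 : ℝ)) {z : ℂ | |z.re| + |z.im| ≤ L₁} := by
  set S := {ξ : ℝ | L₂ ≤ |ξ|} with hS_def
  have hSm : MeasurableSet S := (isClosed_le continuous_const continuous_abs).measurableSet
  set M : ℝ → ℝ := fun t => (Real.sqrt (2 * Real.pi * Real.sinh (2 * t)))⁻¹ *
      Real.exp (-(L₂ - L₁) ^ 2 / (2 * Real.sinh (2 * t))) with hM_def
  have hMnn : ∀ t, 0 ≤ M t := fun t => by positivity
  have part1 : ∀ t : ℝ, 0 < t → ∀ z : ℂ, |z.re| + |z.im| ≤ L₁ →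
      ‖∫ ξ in S, mehlerK t z ξ * w0 ξ‖ ≤ M t * ∫ ξ : ℝ, ‖w0 ξ‖ := by
    intro t ht z hz
    have hint : Integrable (fun ξ => M t * ‖w0 ξ‖) (volume.restrict S) :=
      (hw0.norm.const_mul (M t)).restrict
    have hb : ∀ᵐ ξ ∂(volume.restrict S), ‖mehlerK t z ξ * w0 ξ‖ ≤ M t * ‖w0 ξ‖ := by
      refine (ae_restrict_iff' hSm).2 (ae_of_all _ fun ξ hξ => ?_)
      rw [norm_mul]
      exact mul_le_mul_of_nonneg_right (mehler_bound L₁ L₂ t h₁₂ ht z hz ξ hξ) (norm_nonneg _)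
    calc ‖∫ ξ in S, mehlerK t z ξ * w0 ξ‖ ≤ ∫ ξ in S, M t * ‖w0 ξ‖ :=
          norm_integral_le_of_norm_le hint hb
      _ = M t * ∫ ξ in S, ‖w0 ξ‖ := by rw [MeasureTheory.integral_const_mul]
      _ ≤ M t * ∫ ξ : ℝ, ‖w0 ξ‖ := by
          refine mul_le_mul_of_nonneg_left ?_ (hMnn t)
          exact setIntegral_le_integral hw0.norm (ae_of_all _ fun _ => norm_nonneg _)
  refine ⟨part1, ?_⟩
  -- uniform convergence
  set I := ∫ ξ : ℝ, ‖w0 ξ‖ with hI_def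
  have hInn : 0 ≤ I := integral_nonneg fun _ => norm_nonneg _
  have ha : (0:ℝ) < (L₂ - L₁) ^ 2 := pow_pos (sub_pos.2 h₁₂) 2
  have hsinh : Tendsto (fun t : ℝ => Real.sinh (2 * t)) (𝓝[>] 0) (𝓝[>] 0) := by
    refine tendsto_nhdsWithin_of_tendsto_nhds_of_eventually_within _ ?_ ?_
    · have : Tendsto (fun t : ℝ => Real.sinh (2 * t)) (𝓝 0) (𝓝 (Real.sinh (2 * 0))) :=
        (Real.continuous_sinh.comp (continuous_const.mul continuous_id)).tendsto 0
      simpa using this.mono_left nhdsWithin_le_nhds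
    · filter_upwards [self_mem_nhdsWithin] with t ht
      exact Real.sinh_pos_iff.2 (by simpa using mul_pos two_pos (Set.mem_Ioi.mp ht))
  have keyF : Tendsto (fun v : ℝ => v ^ ((1:ℝ)/2) * Real.exp (-((L₂ - L₁) ^ 2 / 2) * v))
      atTop (𝓝 0) :=
    tendsto_rpow_mul_exp_neg_mul_atTop_nhds_zero _ _ (div_pos ha two_pos)
  have keyu : Tendsto (fun u : ℝ => (Real.sqrt (2 * Real.pi * u))⁻¹ *
      Real.exp (-(L₂ - L₁) ^ 2 / (2 * u))) (𝓝[>] 0) (𝓝 0) := by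
    have hcomp : Tendsto (fun u : ℝ => (u⁻¹) ^ ((1:ℝ)/2) *
        Real.exp (-((L₂ - L₁) ^ 2 / 2) * u⁻¹)) (𝓝[>] 0) (𝓝 0) :=
      keyF.comp tendsto_inv_nhdsGT_zero
    have hcomp' : Tendsto (fun u : ℝ => (Real.sqrt (2 * Real.pi))⁻¹ * ((u⁻¹) ^ ((1:ℝ)/2) *
        Real.exp (-((L₂ - L₁) ^ 2 / 2) * u⁻¹))) (𝓝[>] 0) (𝓝 ((Real.sqrt (2 * Real.pi))⁻¹ * 0)) :=
      hcomp.const_mul _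
    rw [mul_zero] at hcomp'
    refine hcomp'.congr' ?_
    filter_upwards [self_mem_nhdsWithin] with u hu
    have hu' : (0:ℝ) < u := hu
    have h1 : (Real.sqrt (2 * Real.pi * u))⁻¹
        = (Real.sqrt (2 * Real.pi))⁻¹ * (u⁻¹) ^ ((1:ℝ)/2) := by
      rw [Real.sqrt_mul (by positivity), mul_inv, Real.sqrt_eq_rpow]
      congr 1
      rw [← Real.sqrt_inv, Real.sqrt_eq_rpow]
    have h2 : -(L₂ - L₁) ^ 2 / (2 * u) = -((L₂ - L₁) ^ 2 / 2) * u⁻¹ := by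
      field_simp
    rw [h1, h2]; ring
  have hM0 : Tendsto (fun t => M t * I) (𝓝[>] 0) (𝓝 0) := by
    have := (keyu.comp hsinh).mul_const I
    rw [zero_mul] at this
    exact this
  rw [Metric.tendstoUniformlyOn_iff]
  intro ε hε
  filter_upwards [hM0.eventually (gt_mem_nhds hε), self_mem_nhdsWithin] with t hMt ht
  intro z hz
  simp only [Pi.zero_apply]
  rw [dist_zero_left]
  exact lt_of_le_of_lt (part1 t ht z hz) hMt
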